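/- Let γ ∈ (0,1) and A > 1. Let f ∈ C([0,1]) ∩ C¹([0,1)) satisfy 0 ≤ f ≤ 1, f(0) = γ, f(1) = 1, and f'(y) = ((1+γ)/y)·(γ − f(y)) + γ·f(y)·(1−f(y))/(1−y) for all y ∈ (0,1). Let h ∈ C¹([0,1]) with γ ≤ h ≤ 1 satisfy h(0) = γ, h(1) = 1, and h'(y) = ((1+γ)/y)·(γ − h(y)) + h(y)·(γ + ((A−γ)·exp(∫_y^1 (1−h(q))/(1−q) dq) − A)·h(y))/(1−y) for all y ∈ (0,1). Then the comparison principle fails at y = 1: although h'(y) ≥ ((1+γ)/y)·(γ − h(y)) + γ·h(y)·(1−h(y))/(1−y) for all y ∈ (0,1) and f(1) = h(1) = 1, there exists y₁ ∈ (0,1) such that f(y) < h(y) for all y ∈ (y₁,1); in particular it is not true that h ≤ f on any left neighborhood of 1. -/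

import Mathlib

open Set Real Filter Topology

/-!
The supersolution inequality holds because `h ≤ 1` makes the exponential factor at least `1`.

Comparison fails at `1` because the difference quotients there behave differently. Since `h` is
differentiable at `1`, `(1 - h y) / (1 - y) → h' 1`. For `f`, the ODE together with `f → 1`
gives `d/dy [(1 - f y) / (1 - y)] ≥ c / (1 - y)` near `1` with `c = (1 - γ) / 2`, so
`(1 - f y) / (1 - y) ≥ C - c log (1 - y) → ∞`. Hence `1 - h y < 1 - f y` near `1`.
-/

lemma tendsto_log_sub_nhdsLT (b : ℝ) : Tendsto (fun x => log (b - x)) (𝓝[<] b) atBot := by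
  refine tendsto_log_nhdsGT_zero.comp (tendsto_nhdsWithin_of_tendsto_nhds_of_eventually_within _
    ?_ (eventually_nhdsWithin_of_forall fun x (hx : x < b) => sub_pos.2 hx))
  exact ((continuous_sub_left b).tendsto' b 0 (sub_self b)).mono_left nhdsWithin_le_nhds

lemma tendsto_atTop_of_div_sub_le_deriv {g g' : ℝ → ℝ} {b c : ℝ} (hc : 0 < c)
    (hg : ∀ᶠ x in 𝓝[<] b, HasDerivAt g (g' x) x ∧ c / (b - x) ≤ g' x) :
    Tendsto g (𝓝[<] b) atTop := by
  obtain ⟨a, ha : a < b, hab⟩ := mem_nhdsLT_iff_exists_Ioo_subset.1 hg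
  set w : ℝ → ℝ := fun x => g x + c * log (b - x)
  have hw : ∀ x ∈ Ioo a b, HasDerivAt w (g' x + c * (-1 / (b - x))) x := fun x hx =>
    (hab hx).1.add <|
      HasDerivAt.const_mul c (((hasDerivAt_id x).const_sub b).log (sub_pos.2 hx.2).ne')
  have hmono : MonotoneOn w (Ioo a b) := by
    refine monotoneOn_of_hasDerivWithinAt_nonneg (f' := fun x => g' x + c * (-1 / (b - x)))
      (convex_Ioo a b) (fun x hx => (hw x hx).continuousAt.continuousWithinAt)
      (fun x hx => ?_) (fun x hx => ?_)
    · rw [interior_Ioo] at hx ⊢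
      exact (hw x hx).hasDerivWithinAt
    · rw [interior_Ioo] at hx
      have hlog_term : c * (-1 / (b - x)) = -(c / (b - x)) := by ring
      linarith [(hab hx).2]
  obtain ⟨m, hm⟩ := nonempty_Ioo.2 ha
  have hlower : Tendsto (fun x => w m + -(c * log (b - x))) (𝓝[<] b) atTop :=
    tendsto_atTop_add_const_left _ _
      (tendsto_neg_atBot_atTop.comp ((tendsto_log_sub_nhdsLT b).const_mul_atBot hc))
  refine tendsto_atTop_mono' _ ?_ hlower
  filter_upwards [Ioo_mem_nhdsLT hm.2] with x hx
  have hwx := hmono hm ⟨hm.1.trans hx.1, hx.2⟩ hx.1.le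
  simp only [w] at hwx
  linarith

lemma tendsto_one_sub_div_one_sub_atTop {γ : ℝ} (hγ0 : 0 ≤ γ) (hγ1 : γ < 1)
    {f f' : ℝ → ℝ} (hf1 : Tendsto f (𝓝[<] 1) (𝓝 1)) (hle : ∀ y ∈ Ioo 0 1, f y ≤ 1)
    (hd : ∀ y ∈ Ioo 0 1, HasDerivAt f (f' y) y)
    (hode : ∀ y ∈ Ioo 0 1, f' y = (1 + γ) / y * (γ - f y) + γ * f y * (1 - f y) / (1 - y)) :
    Tendsto (fun y => (1 - f y) / (1 - y)) (𝓝[<] 1) atTop := by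
  refine tendsto_atTop_of_div_sub_le_deriv (c := (1 - γ) / 2)
    (g' := fun x => (1 - f x - f' x * (1 - x)) / (1 - x) ^ 2) (by linarith) ?_
  filter_upwards [Ioo_mem_nhdsLT zero_lt_one,
    hf1.eventually (lt_mem_nhds (by linarith : (1 + γ) / 2 < 1))] with x hx hfx
  have hs : 0 < 1 - x := sub_pos.2 hx.2
  refine ⟨(((hd x hx).const_sub 1).div ((hasDerivAt_id' x).const_sub 1) hs.ne').congr_deriv
    (by ring), ?_⟩
  have hN : 1 - f x - f' x * (1 - x) =
      (1 + γ) / x * (f x - γ) * (1 - x) + (1 - f x) * (1 - γ * f x) := by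
    rw [hode x hx]
    field_simp
    ring
  have hdrift : (1 - γ) / 2 ≤ (1 + γ) / x * (f x - γ) :=
    calc (1 - γ) / 2 ≤ f x - γ := by linarith
      _ ≤ (1 + γ) / x * (f x - γ) :=
        le_mul_of_one_le_left (by linarith) ((one_le_div hx.1).2 (by linarith [hx.2]))
  have hlogistic : 0 ≤ (1 - f x) * (1 - γ * f x) :=
    mul_nonneg (by linarith [hle x hx]) (by nlinarith [hle x hx])
  rw [div_le_div_iff₀ hs (by positivity), hN]
  nlinarith [mul_le_mul_of_nonneg_right hdrift hs.le]

lemma one_le_exp_integral_one_sub_div {h : ℝ → ℝ} {y : ℝ} (hy : y ≤ 1)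
    (hh : ∀ q ∈ Icc y 1, h q ≤ 1) : 1 ≤ exp (∫ q in y..1, (1 - h q) / (1 - q)) :=
  one_le_exp (intervalIntegral.integral_nonneg hy fun q hq =>
    div_nonneg (sub_nonneg.2 (hh q hq)) (sub_nonneg.2 hq.2))

lemma mul_one_sub_le_riccati {γ A E η : ℝ} (hγA : γ ≤ A) (hE : 1 ≤ E) :
    γ * η * (1 - η) ≤ η * (γ + ((A - γ) * E - A) * η) := by
  nlinarith [mul_nonneg (sq_nonneg η) (mul_nonneg (sub_nonneg.2 hγA) (sub_nonneg.2 hE))]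

theorem stmt19_general (γ A : ℝ) (hγ : γ ∈ Ioo (0:ℝ) 1) (hA : 1 < A)
    (f f' : ℝ → ℝ)
    (hfc : ContinuousOn f (Icc (0:ℝ) 1))
    (hfd : ∀ y ∈ Ico (0:ℝ) 1, HasDerivWithinAt f (f' y) (Ico (0:ℝ) 1) y)
    (hfbd : ∀ y ∈ Icc (0:ℝ) 1, 0 ≤ f y ∧ f y ≤ 1)
    (hf1 : f 1 = 1)
    (hfode : ∀ y ∈ Ioo (0:ℝ) 1,
      f' y = (1 + γ) / y * (γ - f y) + γ * f y * (1 - f y) / (1 - y))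
    (h h' : ℝ → ℝ)
    (hhd : ∀ y ∈ Icc (0:ℝ) 1, HasDerivWithinAt h (h' y) (Icc (0:ℝ) 1) y)
    (hhbd : ∀ y ∈ Icc (0:ℝ) 1, γ ≤ h y ∧ h y ≤ 1)
    (hh1 : h 1 = 1)
    (hhode : ∀ y ∈ Ioo (0:ℝ) 1, h' y =
      (1 + γ) / y * (γ - h y) +
        h y * (γ + ((A - γ) * Real.exp (∫ q in y..(1:ℝ), (1 - h q) / (1 - q)) - A) * h y)
          / (1 - y)) :
    (∀ y ∈ Ioo (0:ℝ) 1,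
      (1 + γ) / y * (γ - h y) + γ * h y * (1 - h y) / (1 - y) ≤ h' y) ∧
    (∃ y1 ∈ Ioo (0:ℝ) 1, ∀ y ∈ Ioo y1 1, f y < h y) := by
  refine ⟨fun y hy => ?_, ?_⟩
  · have hE := one_le_exp_integral_one_sub_div hy.2.le fun q hq =>
      (hhbd q ⟨hy.1.le.trans hq.1, hq.2⟩).2
    rw [hhode y hy]
    exact (add_le_add_iff_left _).2 (div_le_div_of_nonneg_right
      (mul_one_sub_le_riccati (hγ.2.trans hA).le hE) (sub_pos.2 hy.2).le)
  have hf_tendsto : Tendsto (fun y => (1 - f y) / (1 - y)) (𝓝[<] 1) atTop := by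
    refine tendsto_one_sub_div_one_sub_atTop hγ.1.le hγ.2 ?_
      (fun y hy => (hfbd y (Ioo_subset_Icc_self hy)).2)
      (fun y hy => (hfd y (Ioo_subset_Ico_self hy)).hasDerivAt (Ico_mem_nhds hy.1 hy.2)) hfode
    have := (hfc.continuousWithinAt (right_mem_Icc.2 zero_le_one)).mono Ioo_subset_Icc_self
    rwa [ContinuousWithinAt, hf1, nhdsWithin_Ioo_eq_nhdsLT zero_lt_one] at this
  have hh_slope : Tendsto (slope h 1) (𝓝[<] 1) (𝓝 (h' 1)) :=
    (hasDerivWithinAt_iff_tendsto_slope' (s := Iio 1) (lt_irrefl 1)).1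
      ((hhd 1 (right_mem_Icc.2 zero_le_one)).mono_of_mem_nhdsWithin (Icc_mem_nhdsLT zero_lt_one))
  have hlt : ∀ᶠ y in 𝓝[<] 1, f y < h y := by
    filter_upwards [hh_slope.eventually (gt_mem_nhds (lt_add_one (h' 1))),
      hf_tendsto.eventually_gt_atTop (h' 1 + 1), self_mem_nhdsWithin] with y hslope hfy (hy : y < 1)
    rw [slope_def_field, hh1, ← neg_div_neg_eq, neg_sub, neg_sub] at hslope
    have := (div_lt_div_iff_of_pos_right (sub_pos.2 hy)).1 (hslope.trans hfy)
    linarith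
  obtain ⟨y1, hy1, hsub⟩ := (mem_nhdsLT_iff_exists_mem_Ico_Ioo_subset one_half_lt_one).1 hlt
  exact ⟨y1, ⟨one_half_pos.trans_le hy1.1, hy1.2⟩, hsub⟩

/-- **Failure of the comparison principle at `y = 1`.**
Let `f` solve `f' = (1+γ)/y·(γ−f) + γ·f(1−f)/(1−y)` with `f 0 = γ`, `f 1 = 1`,
`0 ≤ f ≤ 1`, and let `h ∈ C¹([0,1])` with `γ ≤ h ≤ 1` solve the singular
path-dependent Riccati ODE with `h 0 = γ`, `h 1 = 1`. Then `h` is a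
supersolution of `f`'s ODE, yet `f < h` on a left neighborhood of `1`; in
particular `h ≤ f` fails near `1`. -/
theorem stmt19 (γ A : ℝ) (hγ : γ ∈ Ioo (0:ℝ) 1) (hA : 1 < A)
    (f f' : ℝ → ℝ)
    (hfc : ContinuousOn f (Icc (0:ℝ) 1))
    (hfc' : ContinuousOn f' (Ico (0:ℝ) 1))
    (hfd : ∀ y ∈ Ico (0:ℝ) 1, HasDerivWithinAt f (f' y) (Ico (0:ℝ) 1) y)
    (hfbd : ∀ y ∈ Icc (0:ℝ) 1, 0 ≤ f y ∧ f y ≤ 1)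
    (hf0 : f 0 = γ) (hf1 : f 1 = 1)
    (hfode : ∀ y ∈ Ioo (0:ℝ) 1,
      f' y = (1 + γ) / y * (γ - f y) + γ * f y * (1 - f y) / (1 - y))
    (h h' : ℝ → ℝ)
    (hhc' : ContinuousOn h' (Icc (0:ℝ) 1))
    (hhd : ∀ y ∈ Icc (0:ℝ) 1, HasDerivWithinAt h (h' y) (Icc (0:ℝ) 1) y)
    (hhbd : ∀ y ∈ Icc (0:ℝ) 1, γ ≤ h y ∧ h y ≤ 1)
    (hh0 : h 0 = γ) (hh1 : h 1 = 1)
    (hhode : ∀ y ∈ Ioo (0:ℝ) 1, h' y =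
      (1 + γ) / y * (γ - h y) +
        h y * (γ + ((A - γ) * Real.exp (∫ q in y..(1:ℝ), (1 - h q) / (1 - q)) - A) * h y)
          / (1 - y)) :
    (∀ y ∈ Ioo (0:ℝ) 1,
      (1 + γ) / y * (γ - h y) + γ * h y * (1 - h y) / (1 - y) ≤ h' y) ∧
    (∃ y1 ∈ Ioo (0:ℝ) 1, ∀ y ∈ Ioo y1 1, f y < h y) :=
  stmt19_general γ A hγ hA f f' hfc hfd hfbd hf1 hfode h h' hhd hhbd hh1 hhode
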